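/- (Skew-adjointness of the EQ structure operator M(Φ).) Let N be a positive natural number, and work in ℝ^N with the standard inner product ⟨·,·⟩ and componentwise product ⊙. Let S : ℝ^N → ℝ^N be a bijective linear map with ⟨S v, v⟩ = 0 for all v, fix a ∈ ℝ^N, and define L w = S(a ⊙ w) and L* w = −a ⊙ (S w). Define M : ℝ^N × ℝ^N → ℝ^N × ℝ^N by M(v, w) = ( S v + 2 L w , −2 L* v − 4 L*( S⁻¹ (L w) ) ). Then for all (v, w) ∈ ℝ^N × ℝ^N, ⟨S v + 2 L w, v⟩ + ⟨−2 L* v − 4 L*(S⁻¹(L w)), w⟩ = 0; i.e., ⟨M(v,w), (v,w)⟩ = 0 in the product inner product space. -/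

import Mathlib

open scoped RealInnerProductSpace

/-- Componentwise (pointwise) product on `EuclideanSpace ℝ (Fin N)`. -/
def cwMul {N : ℕ} (v w : EuclideanSpace ℝ (Fin N)) : EuclideanSpace ℝ (Fin N) :=
  WithLp.toLp 2 (fun i => v i * w i)

section SkewStructure

variable {E : Type*} [NormedAddCommGroup E] [InnerProductSpace ℝ E]

theorem inner_map_left_eq_neg_inner_map_right {S : E →ₗ[ℝ] E} (hS : ∀ v, ⟪S v, v⟫ = 0)
    (x y : E) : ⟪S x, y⟫ = -⟪x, S y⟫ := by
  have hxy := hS (x + y)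
  rw [map_add, inner_add_left, inner_add_right, inner_add_right, hS x, hS y,
    real_inner_comm x (S y)] at hxy
  linarith

/-- With `L = S ∘ A` and `L* = -(A ∘ S)`, the quadratic form of the block operator
`[[S, 2L], [-2L*, -4L* S⁻¹ L]]` vanishes; here `S⁻¹ L = A` has already been cancelled. -/
theorem inner_blockOperator_self_eq_zero {S : E →ₗ[ℝ] E} (hS : ∀ v, ⟪S v, v⟫ = 0)
    {A : E → E} (hA : ∀ x y, ⟪A x, y⟫ = ⟪x, A y⟫) (v w : E) :
    ⟪S v + (2 : ℝ) • S (A w), v⟫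
      + ⟪(-2 : ℝ) • (-(A (S v))) + (-4 : ℝ) • (-(A (S (A w)))), w⟫ = 0 := by
  have hcross : ⟪S (A w), v⟫ + ⟪A (S v), w⟫ = 0 := by
    rw [hA, inner_map_left_eq_neg_inner_map_right hS, real_inner_comm (A w) (S v)]
    ring
  have hdiag : ⟪A (S (A w)), w⟫ = 0 := by rw [hA, hS]
  simp only [inner_add_left, inner_smul_left, inner_neg_left, conj_trivial, hS v]
  linear_combination (2 : ℝ) * hcross + (4 : ℝ) * hdiag

end SkewStructure

theorem inner_cwMul_left {N : ℕ} (a x y : EuclideanSpace ℝ (Fin N)) :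
    ⟪cwMul a x, y⟫ = ⟪x, cwMul a y⟫ := by
  simp only [PiLp.inner_apply, RCLike.inner_apply, conj_trivial, cwMul]
  exact Finset.sum_congr rfl fun i _ => by ring

theorem eq_structure_operator_skew_general
    (N : ℕ)
    (S : EuclideanSpace ℝ (Fin N) →ₗ[ℝ] EuclideanSpace ℝ (Fin N))
    (hS : ∀ v : EuclideanSpace ℝ (Fin N), ⟪S v, v⟫ = 0)
    (Sinv : EuclideanSpace ℝ (Fin N) →ₗ[ℝ] EuclideanSpace ℝ (Fin N))
    (hSinv₂ : ∀ v, Sinv (S v) = v)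
    (a : EuclideanSpace ℝ (Fin N)) :
    ∀ v w : EuclideanSpace ℝ (Fin N),
      ⟪S v + (2 : ℝ) • S (cwMul a w), v⟫
        + ⟪(-2 : ℝ) • (-(cwMul a (S v)))
            + (-4 : ℝ) • (-(cwMul a (S (Sinv (S (cwMul a w)))))), w⟫ = 0 := by
  intro v w
  rw [hSinv₂]
  exact inner_blockOperator_self_eq_zero hS (inner_cwMul_left a) v w

/-- skew-adjointness of the EQ structure operator
M(v,w) = (S v + 2 L w, −2 L* v − 4 L*(S⁻¹(L w))), where L w = S(a ⊙ w) and
L* w = −a ⊙ (S w): one has ⟨M(v,w), (v,w)⟩ = 0. -/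
theorem eq_structure_operator_skew
    (N : ℕ) (hN : 0 < N)
    (S : EuclideanSpace ℝ (Fin N) →ₗ[ℝ] EuclideanSpace ℝ (Fin N))
    (hS : ∀ v : EuclideanSpace ℝ (Fin N), ⟪S v, v⟫ = 0)
    (hbij : Function.Bijective S)
    (Sinv : EuclideanSpace ℝ (Fin N) →ₗ[ℝ] EuclideanSpace ℝ (Fin N))
    (hSinv₁ : ∀ v, S (Sinv v) = v) (hSinv₂ : ∀ v, Sinv (S v) = v)
    (a : EuclideanSpace ℝ (Fin N)) :
    ∀ v w : EuclideanSpace ℝ (Fin N),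
      ⟪S v + (2 : ℝ) • S (cwMul a w), v⟫
        + ⟪(-2 : ℝ) • (-(cwMul a (S v)))
            + (-4 : ℝ) • (-(cwMul a (S (Sinv (S (cwMul a w)))))), w⟫ = 0 :=
  eq_structure_operator_skew_general N S hS Sinv hSinv₂ a
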